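/- Let A be a commutative ℚ-algebra and let (E, H, P) be a symmetric triple over A such that [t^k]E = [t^{k−1}]P for all k ≥ 1 (i.e. e_k = p_k for all k ≥ 1). Then there exists c ∈ A such that for all k ≥ 0: [t^k]H = c^k/(k+1)! and [t^k]E = (−1)^k·c^k·B_k/k!, where B_k is the k-th Bernoulli number (with the convention B₁ = −1/2, i.e. Σ_{k≥0} B_k t^k/k! = t/(e^t − 1)). -/

import Mathlib

open PowerSeries Finset

/-- A symmetric triple: `E` and `H` have constant coefficient `1`,
`E′(t) = E(t)·P(−t)` and `H′(t) = H(t)·P(t)`. -/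
def IsSymmetricTriple {A : Type*} [CommRing A] (E H P : PowerSeries A) : Prop :=
  PowerSeries.constantCoeff E = 1 ∧ PowerSeries.constantCoeff H = 1 ∧
    d⁄dX A E = E * PowerSeries.rescale (-1) P ∧ d⁄dX A H = H * P

/-!
Put `c = 2 e₁`. The hypothesis says `t P(t) = E(t) - 1`, and with it the two differential
equations give `t O′ = O` for `O(t) = E(t) - E(-t)`; hence `O = c t`, i.e. `P(t) + P(-t) = c`.
Then `(E H)′ = E H (P(-t) + P(t)) = c E H`, so `E H = e^{ct}`, and
`(t H)′ = H + H (E - 1) = E H = e^{ct}`, so `H = (e^{ct} - 1) / (ct)`. Finally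
`E = e^{ct} / H = ct e^{ct} / (e^{ct} - 1)` is the Bernoulli generating function at `-ct`.
-/

namespace PowerSeries

section CommRing

variable {A : Type*} [CommRing A]

theorem X_mul_eq_sub_C_of_coeff_eq {f g : A⟦X⟧}
    (h : ∀ k : ℕ, 1 ≤ k → coeff k f = coeff (k - 1) g) :
    X * g = f - C (constantCoeff f) := by
  ext (_ | n)
  · simp
  · simp [coeff_succ_X_mul, h (n + 1) n.succ_pos]

theorem X_mul_rescale_neg_one_eq {f g : A⟦X⟧} (h : X * g = f - 1) :
    X * rescale (-1) g = 1 - rescale (-1) f := by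
  have := congrArg (rescale (-1 : A)) h
  rw [map_mul, map_sub, map_one, rescale_neg_one_X] at this
  linear_combination -this

theorem derivative_rescale (a : A) (f : A⟦X⟧) :
    d⁄dX A (rescale a f) = C a * rescale a (d⁄dX A f) := by
  ext n
  simp only [coeff_derivative, coeff_rescale, coeff_C_mul, pow_succ]
  ring

theorem eq_C_mul_X_of_X_mul_derivative_eq_self [IsAddTorsionFree A] {f : A⟦X⟧}
    (h : X * d⁄dX A f = f) : f = C (coeff 1 f) * X := by
  ext (_ | _ | n)
  · simpa using (congrArg (coeff 0) h).symm
  · simp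
  · have hn := congrArg (coeff (n + 2)) h
    rw [coeff_succ_X_mul, coeff_derivative] at hn
    have : (n + 1) • coeff (n + 2) f = 0 := by
      rw [succ_nsmul, nsmul_eq_mul]
      push_cast at hn
      linear_combination hn
    simpa [coeff_C_mul, coeff_X] using (smul_eq_zero.mp this).resolve_left n.succ_ne_zero

end CommRing

section Rat

variable {A : Type*} [CommRing A] [Algebra ℚ A]

theorem derivative_rescale_exp (a : A) :
    d⁄dX A (rescale a (exp A)) = C a * rescale a (exp A) := by
  rw [derivative_rescale, derivative_exp]

theorem eq_C_mul_rescale_exp_of_derivative_eq {f : A⟦X⟧} {a : A} (h : d⁄dX A f = C a * f) :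
    f = C (constantCoeff f) * rescale a (exp A) := by
  have : IsAddTorsionFree A := .of_module_rat A
  have hconst : f * rescale (-a) (exp A) = C (constantCoeff f) := by
    refine derivative.ext ?_ ?_
    · rw [Derivation.leibniz, derivative_rescale_exp, h, derivative_C, smul_eq_mul, smul_eq_mul,
        map_neg]
      ring
    · rw [map_mul, ← coeff_zero_eq_constantCoeff_apply (rescale _ _), coeff_rescale]
      simp
  calc f = f * (rescale (-a) (exp A) * rescale a (exp A)) := by
        rw [exp_mul_exp_eq_exp_add, neg_add_cancel, rescale_zero_apply, constantCoeff_exp,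
          map_one, mul_one]
    _ = C (constantCoeff f) * rescale a (exp A) := by rw [← mul_assoc, hconst]

variable (A) in
def expSubOneDivX : A⟦X⟧ :=
  mk fun n => algebraMap ℚ A (1 / (n + 1).factorial)

@[simp]
theorem coeff_expSubOneDivX (n : ℕ) :
    coeff n (expSubOneDivX A) = algebraMap ℚ A (1 / (n + 1).factorial) :=
  coeff_mk _ _

theorem X_mul_expSubOneDivX : X * expSubOneDivX A = exp A - 1 := by
  ext (_ | n)
  · simp
  · simp [coeff_succ_X_mul]

theorem derivative_X_mul_rescale_expSubOneDivX (a : A) :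
    d⁄dX A (X * rescale a (expSubOneDivX A)) = rescale a (exp A) := by
  ext n
  rw [coeff_derivative, coeff_succ_X_mul, coeff_rescale, coeff_rescale, coeff_expSubOneDivX,
    coeff_exp, mul_assoc]
  congr 1
  rw [show (n : A) + 1 = algebraMap ℚ A (n + 1) by simp, ← map_mul, Nat.factorial_succ]
  congr 1
  push_cast
  field_simp

theorem rescale_neg_one_bernoulliPowerSeries_mul_expSubOneDivX :
    rescale (-1) (bernoulliPowerSeries A) * expSubOneDivX A = exp A := by
  have hB := congrArg (rescale (-1 : A)) (bernoulliPowerSeries_mul_exp_sub_one A)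
  rw [map_mul, map_sub, map_one, rescale_neg_one_X] at hB
  have hexp : exp A * rescale (-1) (exp A) = 1 := exp_mul_exp_neg_eq_one
  apply X_mul_cancel
  linear_combination rescale (-1) (bernoulliPowerSeries A) * (X_mul_expSubOneDivX (A := A) + hexp)
    - exp A * hB

end Rat

end PowerSeries

namespace IsSymmetricTriple

variable {A : Type*} [CommRing A] {E H P : A⟦X⟧}

theorem X_mul_derivative_sub_rescale_neg_one (hT : IsSymmetricTriple E H P)
    (hP : X * P = E - 1) :
    X * d⁄dX A (E - rescale (-1) E) = E - rescale (-1) E := by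
  obtain ⟨-, -, hE, -⟩ := hT
  rw [map_sub, derivative_rescale, hE, map_mul, rescale_rescale, neg_one_mul, neg_neg,
    rescale_one, RingHom.id_apply, map_neg, map_one]
  linear_combination E * X_mul_rescale_neg_one_eq hP + rescale (-1) E * hP

variable [Algebra ℚ A]

theorem add_rescale_neg_one_eq_C (hT : IsSymmetricTriple E H P) (hP : X * P = E - 1) :
    P + rescale (-1) P = C (2 * coeff 1 E) := by
  have : IsAddTorsionFree A := .of_module_rat A
  have hodd := eq_C_mul_X_of_X_mul_derivative_eq_self (hT.X_mul_derivative_sub_rescale_neg_one hP)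
  rw [map_sub, coeff_rescale, pow_one, neg_one_mul, sub_neg_eq_add, ← two_mul] at hodd
  apply X_mul_cancel
  linear_combination hP + X_mul_rescale_neg_one_eq hP + hodd

theorem mul_eq_rescale_exp (hT : IsSymmetricTriple E H P) (hP : X * P = E - 1) :
    E * H = rescale (2 * coeff 1 E) (exp A) := by
  have hsym := hT.add_rescale_neg_one_eq_C hP
  obtain ⟨hE0, hH0, hE, hH⟩ := hT
  have hEH : d⁄dX A (E * H) = C (2 * coeff 1 E) * (E * H) := by
    rw [Derivation.leibniz, hE, hH, smul_eq_mul, smul_eq_mul, ← hsym]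
    ring
  simpa [hE0, hH0] using eq_C_mul_rescale_exp_of_derivative_eq hEH

theorem eq_rescale_expSubOneDivX (hT : IsSymmetricTriple E H P) (hP : X * P = E - 1) :
    H = rescale (2 * coeff 1 E) (expSubOneDivX A) := by
  have : IsAddTorsionFree A := .of_module_rat A
  have hEH := hT.mul_eq_rescale_exp hP
  obtain ⟨-, -, -, hH⟩ := hT
  apply X_mul_cancel
  refine derivative.ext ?_ (by simp)
  rw [derivative_X_mul_rescale_expSubOneDivX, ← hEH, Derivation.leibniz, hH, derivative_X,
    smul_eq_mul, smul_eq_mul]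
  linear_combination H * hP

theorem eq_rescale_bernoulliPowerSeries (hT : IsSymmetricTriple E H P) (hP : X * P = E - 1) :
    E = rescale (-(2 * coeff 1 E)) (bernoulliPowerSeries A) := by
  have hunit : IsUnit H := isUnit_iff_constantCoeff.mpr (hT.2.1 ▸ isUnit_one)
  rw [← hunit.mul_left_inj, hT.mul_eq_rescale_exp hP, hT.eq_rescale_expSubOneDivX hP,
    neg_eq_neg_one_mul, ← rescale_rescale _ (-1), ← map_mul,
    rescale_neg_one_bernoulliPowerSeries_mul_expSubOneDivX]

end IsSymmetricTriple

/-- If `e_k = p_k` for all `k ≥ 1` in a symmetric triple over a `ℚ`-algebra, then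
for some `c`, `h_k = c^k/(k+1)!` and `e_k = (−1)^k c^k B_k/k!`, where `B_k` are the
Bernoulli numbers with `B₁ = −1/2` (Mathlib's `bernoulli`). -/
theorem symmetricTriple_e_eq_p (A : Type*) [CommRing A] [Algebra ℚ A] (E H P : PowerSeries A)
    (hT : IsSymmetricTriple E H P)
    (h : ∀ k : ℕ, 1 ≤ k → PowerSeries.coeff k E = PowerSeries.coeff (k - 1) P) :
    ∃ c : A, ∀ k : ℕ,
      PowerSeries.coeff k H = algebraMap ℚ A (1 / (k + 1).factorial) * c ^ k ∧
      PowerSeries.coeff k E =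
        algebraMap ℚ A ((-1) ^ k * bernoulli k / k.factorial) * c ^ k := by
  have hP : X * P = E - 1 := by rw [X_mul_eq_sub_C_of_coeff_eq h, hT.1, map_one]
  refine ⟨2 * coeff 1 E, fun k => ⟨?_, ?_⟩⟩
  · rw [hT.eq_rescale_expSubOneDivX hP, coeff_rescale, coeff_expSubOneDivX, mul_comm]
  · rw [congrArg (coeff k) (hT.eq_rescale_bernoulliPowerSeries hP), coeff_rescale,
      bernoulliPowerSeries, coeff_mk, mul_div_assoc, map_mul, map_pow, map_neg, map_one, neg_pow]
    ring
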